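/- arXiv:2507.00541 — 9 statements merged into one kernel-verified Lean document; each statement's English description precedes it below -/
import Mathlib

section
/- If every cofinally Bourbaki quasi-Cauchy sequence in a metric space X has a Cauchy subsequence, then the completion of X is cofinally Bourbaki quasi-complete. -/
open Metric Filter

/-- `y` is joinable to `x` by a finite `ε`-chain. -/
def JoinableBy {X : Type*} [MetricSpace X] (ε : ℝ) (x y : X) : Prop :=
  ∃ (k : ℕ) (u : ℕ → X), u 0 = x ∧ u k = y ∧ ∀ i < k, dist (u i) (u (i + 1)) < ε

/-- The `ε`-chainable component of `x`. -/
def ChainComp {X : Type*} [MetricSpace X] (ε : ℝ) (x : X) : Set X :=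
  {y | JoinableBy ε x y}

/-- Points reachable from `p` by an `ε`-chain of length at most `m`. -/
def SmChain {X : Type*} [MetricSpace X] (ε : ℝ) (m : ℕ) (p : X) : Set X :=
  {y | ∃ k ≤ m, ∃ u : ℕ → X, u 0 = p ∧ u k = y ∧ ∀ i < k, dist (u i) (u (i + 1)) < ε}

/-- Cofinally Bourbaki quasi-Cauchy sequence. -/
def IsCBQC {X : Type*} [MetricSpace X] (x : ℕ → X) : Prop :=
  ∀ ε > (0 : ℝ), ∃ N : Set ℕ, N.Infinite ∧ ∀ j ∈ N, ∀ k ∈ N, JoinableBy ε (x j) (x k)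

/-- Cofinally Bourbaki-Cauchy sequence. -/
def IsCBC {X : Type*} [MetricSpace X] (x : ℕ → X) : Prop :=
  ∀ ε > (0 : ℝ), ∃ N : Set ℕ, N.Infinite ∧ ∃ m : ℕ, ∃ p : X, ∀ n ∈ N, x n ∈ SmChain ε m p

/-- Cofinally Cauchy sequence. -/
def IsCofCauchy {X : Type*} [MetricSpace X] (x : ℕ → X) : Prop :=
  ∀ ε > (0 : ℝ), ∃ N : Set ℕ, N.Infinite ∧ ∀ n ∈ N, ∀ m ∈ N, dist (x n) (x m) < ε

/-- Cofinally Bourbaki quasi-complete metric space. -/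
def CBQComplete (X : Type*) [MetricSpace X] : Prop :=
  ∀ x : ℕ → X, IsCBQC x → ∃ p : X, MapClusterPt p atTop x

theorem completion_cbqComplete_of_cauchy_subseq {X : Type*} [MetricSpace X]
    (h : ∀ x : ℕ → X, IsCBQC x → ∃ φ : ℕ → ℕ, StrictMono φ ∧ CauchySeq (x ∘ φ)) :
    CBQComplete (UniformSpace.Completion X) := by
  intro y hy
  -- choose approximations in X
  have hx : ∀ n : ℕ, ∃ v : X, dist (y n) (v : UniformSpace.Completion X) < 1 / ((n : ℝ) + 1) := by
    intro n
    exact Metric.denseRange_iff.1 UniformSpace.Completion.denseRange_coe (y n) _ (by positivity)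
  choose x hxd using hx
  -- x is CBQC in X
  have hxc : IsCBQC x := by
    intro ε hε
    obtain ⟨N, hNinf, hN⟩ := hy (ε / 8) (by linarith)
    obtain ⟨M, hM⟩ := exists_nat_gt (8 / ε)
    have hbadfin : ({n : ℕ | ¬ (1 / ((n : ℝ) + 1) < ε / 8)}).Finite := by
      apply Set.Finite.subset (Set.finite_Iio M)
      intro n hn
      simp only [Set.mem_setOf_eq, not_lt] at hn
      by_contra hnM
      simp only [Set.mem_Iio, not_lt] at hnM
      have h1 : (8 : ℝ) / ε < (n : ℝ) + 1 := lt_of_lt_of_le hM (by exact_mod_cast Nat.le_succ_of_le hnM)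
      have h2 : 1 / ((n : ℝ) + 1) < ε / 8 := by
        rw [div_lt_iff₀ (by positivity)]
        rw [div_lt_iff₀ hε] at h1
        linarith
      exact absurd h2 (not_lt.2 hn)
    refine ⟨N \ {n : ℕ | ¬ (1 / ((n : ℝ) + 1) < ε / 8)}, hNinf.diff hbadfin, ?_⟩
    rintro j ⟨hjN, hj⟩ k ⟨hkN, hk⟩
    simp only [Set.mem_setOf_eq, not_not] at hj hk
    obtain ⟨m, u, hu0, hum, hstep⟩ := hN j hjN k hkN
    -- approximate interior chain points
    have ha : ∀ i : ℕ, ∃ v : X, dist (u i) (v : UniformSpace.Completion X) < ε / 8 := by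
      intro i
      exact Metric.denseRange_iff.1 UniformSpace.Completion.denseRange_coe (u i) _ (by linarith)
    choose a hadist using ha
    refine ⟨m + 2, fun i => if i = 0 then x j else if i ≤ m + 1 then a (i - 1) else x k,
      by simp, by simp [Nat.succ_ne_zero], ?_⟩
    intro i hi
    have key : ∀ b c : X, ∀ p q : UniformSpace.Completion X,
        dist p (b : UniformSpace.Completion X) < ε / 4 →
        dist q (c : UniformSpace.Completion X) < ε / 4 → dist p q < ε / 2 → dist b c < ε := by
      intro b c p q h1 h2 h3
      have : dist (b : UniformSpace.Completion X) (c : UniformSpace.Completion X) < ε := by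
        calc dist (b : UniformSpace.Completion X) c
            ≤ dist (b : UniformSpace.Completion X) p + dist p q + dist q c := dist_triangle4 _ _ _ _
          _ < ε / 4 + ε / 2 + ε / 4 := by
              rw [dist_comm (b : UniformSpace.Completion X) p]
              gcongr
          _ = ε := by ring
      rwa [UniformSpace.Completion.dist_eq] at this
    rcases Nat.eq_zero_or_pos i with hi0 | hipos
    · subst hi0
      simp only [if_pos rfl, if_neg (Nat.succ_ne_zero 0), if_pos (by omega : 1 ≤ m + 1)]
      refine key (x j) (a 0) (y j) (u 0) ?_ ?_ ?_
      · calc dist (y j) ((x j : UniformSpace.Completion X)) < 1 / ((j : ℝ) + 1) := hxd j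
          _ < ε / 8 := hj
          _ ≤ ε / 4 := by linarith
      · exact lt_of_lt_of_le (hadist 0) (by linarith)
      · rw [hu0, dist_self]; linarith
    · rcases Nat.lt_or_ge i (m + 1) with him | him
      · -- 1 ≤ i ≤ m : both a-terms
        have h1 : ¬ i = 0 := by omega
        have h2 : i ≤ m + 1 := by omega
        have h3 : ¬ i + 1 = 0 := by omega
        have h4 : i + 1 ≤ m + 1 := by omega
        simp only [if_neg h1, if_pos h2, if_neg h3, if_pos h4]
        refine key (a (i - 1)) (a i) (u (i - 1)) (u i) ?_ ?_ ?_
        · exact lt_of_lt_of_le (hadist (i - 1)) (by linarith)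
        · exact lt_of_lt_of_le (hadist i) (by linarith)
        · have : i - 1 + 1 = i := by omega
          have := hstep (i - 1) (by omega)
          rw [show i - 1 + 1 = i from by omega] at this
          linarith
      · -- i = m + 1
        have hieq : i = m + 1 := by omega
        subst hieq
        have h1 : ¬ m + 1 = 0 := by omega
        have h3 : ¬ m + 1 + 1 ≤ m + 1 := by omega
        simp only [if_neg h1, if_pos (le_refl (m + 1)), if_neg (Nat.succ_ne_zero (m + 1)), if_neg h3]
        refine key (a (m + 1 - 1)) (x k) (u m) (y k) ?_ ?_ ?_
        · rw [show m + 1 - 1 = m from rfl]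
          exact lt_of_lt_of_le (hadist m) (by linarith)
        · calc dist (y k) ((x k : UniformSpace.Completion X)) < 1 / ((k : ℝ) + 1) := hxd k
            _ < ε / 8 := hk
            _ ≤ ε / 4 := by linarith
        · rw [hum, dist_self]; linarith
  -- get Cauchy subsequence
  obtain ⟨φ, hφmono, hφcauchy⟩ := h x hxc
  have hcc : CauchySeq (fun n => ((x (φ n) : UniformSpace.Completion X))) :=
    hφcauchy.map (UniformSpace.Completion.uniformContinuous_coe X)
  obtain ⟨p, hp⟩ := cauchySeq_tendsto_of_complete hcc
  refine ⟨p, MapClusterPt.of_comp hφmono.tendsto_atTop ?_⟩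
  · refine Filter.Tendsto.mapClusterPt ?_
    rw [tendsto_iff_dist_tendsto_zero]
    have hb : ∀ n, dist ((y ∘ φ) n) p ≤ 1 / ((φ n : ℝ) + 1) + dist ((x (φ n) : UniformSpace.Completion X)) p := by
      intro n
      calc dist (y (φ n)) p ≤ dist (y (φ n)) ((x (φ n) : UniformSpace.Completion X)) +
            dist ((x (φ n) : UniformSpace.Completion X)) p := dist_triangle _ _ _
        _ ≤ 1 / ((φ n : ℝ) + 1) + dist ((x (φ n) : UniformSpace.Completion X)) p := by
            gcongr; exact le_of_lt (hxd (φ n))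
    have hlim : Tendsto (fun n => 1 / ((φ n : ℝ) + 1) + dist ((x (φ n) : UniformSpace.Completion X)) p)
        atTop (nhds 0) := by
      have h1 : Tendsto (fun n => 1 / ((φ n : ℝ) + 1)) atTop (nhds 0) := by
        apply Tendsto.comp (g := fun m : ℕ => 1 / ((m : ℝ) + 1)) ?_ hφmono.tendsto_atTop
        exact tendsto_one_div_add_atTop_nhds_zero_nat
      have h2 : Tendsto (fun n => dist ((x (φ n) : UniformSpace.Completion X)) p) atTop (nhds 0) :=
        (tendsto_iff_dist_tendsto_zero).1 hp
      simpa using h1.add h2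
    exact squeeze_zero (fun n => dist_nonneg) hb hlim
end

section
/- Let ⟨x̂_n⟩ be a cofinally Bourbaki quasi-Cauchy sequence in the completion X̂ of a metric space X, and for each n choose x_n ∈ X with d̂(x̂_n, x_n) ≤ 1/n. Then ⟨x_n⟩ is cofinally Bourbaki quasi-Cauchy in X. -/
open Metric Filter

theorem isCBQC_approx_of_completion {X : Type*} [MetricSpace X]
    (x' : ℕ → UniformSpace.Completion X) (hx' : IsCBQC x')
    (x : ℕ → X) (happrox : ∀ n : ℕ, dist (x' n) ((x n : UniformSpace.Completion X)) ≤ 1 / (n + 1)) :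
    IsCBQC x := by
  intro ε hε
  obtain ⟨N₀, hN₀inf, hN₀⟩ := hx' (ε / 3) (by linarith)
  -- choose approximations in X for any point of the completion
  have dense := UniformSpace.Completion.denseRange_coe (α := X)
  have approx : ∀ p : UniformSpace.Completion X, ∃ v : X,
      dist p (v : UniformSpace.Completion X) < ε / 3 := by
    intro p
    obtain ⟨v, hv⟩ := dense.exists_dist_lt p (by linarith : (0:ℝ) < ε / 3)
    exact ⟨v, hv⟩
  choose v hv using approx
  -- the bad set where 1/(n+1) is not small is finite
  set B : Set ℕ := {n : ℕ | (1 : ℝ) / (n + 1) ≥ ε / 3} with hB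
  have hBfin : B.Finite := by
    obtain ⟨M, hM⟩ := exists_nat_gt (3 / ε)
    apply Set.Finite.subset (Set.finite_Iio M)
    intro n hn
    simp only [hB, Set.mem_setOf_eq] at hn
    by_contra hcon
    have hnM : (M : ℝ) ≤ n := by exact_mod_cast not_lt.mp hcon
    have h1 : (3 : ℝ) / ε < n + 1 := by linarith
    have h2 : (1 : ℝ) / (n + 1) < ε / 3 := by
      rw [div_lt_div_iff₀ (by positivity) (by linarith)]
      linarith [(div_lt_iff₀ hε).mp h1]
    linarith
  refine ⟨N₀ \ B, hN₀inf.diff hBfin, ?_⟩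
  intro a ha b hb
  have hasmall : (1 : ℝ) / (a + 1) < ε / 3 := not_le.mp ha.2
  have hbsmall : (1 : ℝ) / (b + 1) < ε / 3 := not_le.mp hb.2
  obtain ⟨K, u, hu0, huK, hustep⟩ := hN₀ a ha.1 b hb.1
  refine ⟨K + 2, fun i => if i = 0 then x a else if i ≤ K + 1 then v (u (i - 1)) else x b,
    by simp, ?_, ?_⟩
  · simp [Nat.succ_ne_zero]
  · intro i hi
    rcases Nat.eq_zero_or_pos i with rfl | hipos
    · simp only [if_pos rfl, if_neg (Nat.succ_ne_zero 0), if_pos (by omega : 1 ≤ K + 1)]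
      have : dist ((x a : UniformSpace.Completion X)) ((v (u 0) : UniformSpace.Completion X)) < ε := by
        calc dist ((x a : UniformSpace.Completion X)) ((v (u 0) : UniformSpace.Completion X))
            ≤ dist ((x a : UniformSpace.Completion X)) (x' a) + dist (x' a) ((v (u 0) : UniformSpace.Completion X)) := dist_triangle _ _ _
          _ < ε / 3 + ε / 3 := by
              rw [dist_comm]
              have h2 : dist (x' a) ((v (u 0) : UniformSpace.Completion X)) < ε / 3 := by
                rw [← hu0]; exact hv (u 0)
              exact add_lt_add (lt_of_le_of_lt (happrox a) hasmall) h2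
          _ ≤ ε := by linarith
      rwa [UniformSpace.Completion.dist_eq] at this
    · rcases eq_or_lt_of_le (Nat.lt_succ_iff.mp hi) with hlast | hmid
      · -- i = K + 1
        have hi1 : i ≠ 0 := by omega
        simp only [if_neg hi1, if_pos (by omega : i ≤ K + 1),
          if_neg (by omega : ¬ i + 1 = 0), if_neg (by omega : ¬ i + 1 ≤ K + 1)]
        have hik : i - 1 = K := by omega
        rw [hik]
        have : dist ((v (u K) : UniformSpace.Completion X)) ((x b : UniformSpace.Completion X)) < ε := by
          calc dist ((v (u K) : UniformSpace.Completion X)) ((x b : UniformSpace.Completion X))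
              ≤ dist ((v (u K) : UniformSpace.Completion X)) (x' b) + dist (x' b) ((x b : UniformSpace.Completion X)) := dist_triangle _ _ _
            _ < ε / 3 + ε / 3 := by
                have h1 : dist ((v (u K) : UniformSpace.Completion X)) (x' b) < ε / 3 := by
                  rw [← huK, dist_comm]; exact hv (u K)
                exact add_lt_add h1 (lt_of_le_of_lt (happrox b) hbsmall)
            _ ≤ ε := by linarith
        rwa [UniformSpace.Completion.dist_eq] at this
      · -- 1 ≤ i ≤ K
        have hi1 : i ≠ 0 := by omega
        simp only [if_neg hi1, if_pos (by omega : i ≤ K + 1),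
          if_neg (by omega : ¬ i + 1 = 0), if_pos (by omega : i + 1 ≤ K + 1)]
        have hstep := hustep (i - 1) (by omega)
        have hii : i - 1 + 1 = i := by omega
        rw [hii] at hstep
        have hsub : (i + 1) - 1 = i := by omega
        rw [hsub]
        have : dist ((v (u (i-1)) : UniformSpace.Completion X)) ((v (u i) : UniformSpace.Completion X)) < ε := by
          calc dist ((v (u (i-1)) : UniformSpace.Completion X)) ((v (u i) : UniformSpace.Completion X))
              ≤ dist ((v (u (i-1)) : UniformSpace.Completion X)) (u (i-1)) + dist (u (i-1)) (u i) + dist (u i) ((v (u i) : UniformSpace.Completion X)) := dist_triangle4 _ _ _ _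
            _ < ε / 3 + ε / 3 + ε / 3 := by
                have h1 := hv (u (i-1)); rw [dist_comm] at h1
                exact add_lt_add (add_lt_add h1 hstep) (hv (u i))
            _ = ε := by ring
        rwa [UniformSpace.Completion.dist_eq] at this
end

section
/- In a metric space X, for any x ∈ X, any point x̂ in the completion X̂ with d̂(x, x̂) < δ/3, the δ/3-chainable component of x̂ in X̂ is contained in the closure (in X̂) of the δ-chainable component of x in X: S^∞_{d̂}(x̂, δ/3) ⊆ cl_{X̂}(S^∞_d(x, δ)). -/
open Metric Filter

theorem chainComp_completion_subset_closure {X : Type*} [MetricSpace X]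
    (x : X) (x' : UniformSpace.Completion X) (δ : ℝ) (hδ : 0 < δ)
    (hclose : dist ((x : UniformSpace.Completion X)) x' < δ / 3) :
    ChainComp (δ / 3) x' ⊆
      closure ((fun y : X => (y : UniformSpace.Completion X)) '' ChainComp δ x) := by
  rintro yh ⟨k, u, hu0, huk, hgap⟩
  rw [Metric.mem_closure_iff]
  intro ε hε
  set η : ℝ := min ε (δ / 3) / 2 with hη
  have hη_pos : 0 < η := by positivity
  have hη_le_ε : η ≤ ε := by
    have : min ε (δ / 3) ≤ ε := min_le_left _ _
    simp only [hη]; linarith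
  have hη_lt : η < δ / 3 := by
    have h1 : min ε (δ / 3) ≤ δ / 3 := min_le_right _ _
    have : 0 < δ / 3 := by linarith
    simp only [hη]; linarith
  have happrox : ∀ i : ℕ, ∃ a : X, dist (u i) ((a : UniformSpace.Completion X)) < η := by
    intro i
    have hd : DenseRange ((↑·) : X → UniformSpace.Completion X) :=
      UniformSpace.Completion.denseRange_coe
    obtain ⟨a, ha⟩ := Metric.denseRange_iff.mp hd (u i) η hη_pos
    exact ⟨a, ha⟩
  choose a ha using happrox
  refine ⟨(a k : UniformSpace.Completion X), ⟨a k, ?_, rfl⟩, ?_⟩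
  · refine ⟨k + 1, fun i => if i = 0 then x else a (i - 1), by simp, by simp, ?_⟩
    intro i hi
    cases i with
    | zero =>
      norm_num
      rw [← UniformSpace.Completion.dist_eq]
      have h1 : dist ((x : UniformSpace.Completion X)) ((a 0 : UniformSpace.Completion X)) ≤
          dist ((x : UniformSpace.Completion X)) x' + dist x' ((a 0 : UniformSpace.Completion X)) :=
        dist_triangle _ _ _
      have h2 : dist x' ((a 0 : UniformSpace.Completion X)) < η := by
        rw [← hu0]; exact ha 0
      linarith
    | succ j =>
      have hj : j < k := by omega
      simp only [Nat.succ_ne_zero, if_false, Nat.add_sub_cancel]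
      rw [← UniformSpace.Completion.dist_eq]
      have t1 : dist ((a j : UniformSpace.Completion X)) ((a (j+1) : UniformSpace.Completion X)) ≤
          dist ((a j : UniformSpace.Completion X)) (u j) + dist (u j) (u (j+1)) +
            dist (u (j+1)) ((a (j+1) : UniformSpace.Completion X)) :=
        dist_triangle4 _ _ _ _
      have t2 : dist ((a j : UniformSpace.Completion X)) (u j) < η := by
        rw [dist_comm]; exact ha j
      have t3 := hgap j hj
      have t4 := ha (j + 1)
      linarith
  · have hk := ha k
    rw [huk] at hk
    exact lt_of_lt_of_le hk hη_le_ε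
end

section
/- A metric space X is cofinally Bourbaki quasi-complete if and only if: X is cofinally Bourbaki complete and every cofinally Bourbaki quasi-Cauchy sequence in X is cofinally Bourbaki–Cauchy. -/
open Metric Filter

lemma joinableBy_symm {X : Type*} [MetricSpace X] {ε : ℝ} {x y : X}
    (h : JoinableBy ε x y) : JoinableBy ε y x := by
  obtain ⟨k, u, h0, hk, hs⟩ := h
  refine ⟨k, fun i => u (k - i), by simpa using hk, by simpa using h0, fun i hi => ?_⟩
  show dist (u (k - i)) (u (k - (i + 1))) < ε
  have he : k - i = (k - (i + 1)) + 1 := by omega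
  rw [he, dist_comm]
  exact hs _ (by omega)

lemma joinableBy_trans {X : Type*} [MetricSpace X] {ε : ℝ} {x y z : X}
    (h1 : JoinableBy ε x y) (h2 : JoinableBy ε y z) : JoinableBy ε x z := by
  obtain ⟨k, u, hu0, huk, hus⟩ := h1
  obtain ⟨l, v, hv0, hvl, hvs⟩ := h2
  refine ⟨k + l, fun i => if i < k then u i else v (i - k), ?_, ?_, ?_⟩
  · rcases Nat.eq_zero_or_pos k with hk0 | hk0
    · simp [hk0, hv0, ← huk, hk0, hu0]
    · simp [hk0, hu0]
  · simp [hvl]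
  · intro i hi
    by_cases h1 : i + 1 < k
    · have : i < k := by omega
      simp only [this, h1, if_pos]
      exact hus i (by omega)
    · by_cases h2 : i < k
      · have hik : i + 1 = k := by omega
        show dist (if i < k then u i else v (i - k)) (if i + 1 < k then u (i+1) else v (i + 1 - k)) < ε
        rw [if_pos h2, if_neg h1, show i + 1 - k = 0 by omega, hv0, ← huk, ← hik]
        exact hus i (by omega)
      · have he : i + 1 - k = (i - k) + 1 := by omega
        simp only [if_neg h1, if_neg h2, he]
        exact hvs _ (by omega)

lemma isCBC_of_cluster {X : Type*} [MetricSpace X] {x : ℕ → X} {p : X}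
    (h : MapClusterPt p atTop x) : IsCBC x := by
  intro ε hε
  have hf : ∃ᶠ n in atTop, x n ∈ ball p ε :=
    mapClusterPt_iff_frequently.mp h (ball p ε) (ball_mem_nhds p hε)
  refine ⟨{n | x n ∈ ball p ε}, Nat.frequently_atTop_iff_infinite.mp hf, 1, p, ?_⟩
  intro n hn
  refine ⟨1, le_refl 1, fun i => if i = 0 then p else x n, by simp, by simp, ?_⟩
  intro i hi
  interval_cases i
  simpa [dist_comm] using hn

lemma isCBQC_of_isCBC {X : Type*} [MetricSpace X] {x : ℕ → X} (h : IsCBC x) : IsCBQC x := by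
  intro ε hε
  obtain ⟨N, hN, m, p, hmem⟩ := h ε hε
  refine ⟨N, hN, fun j hj k hk => ?_⟩
  obtain ⟨kj, -, uj, h0j, hkj, hsj⟩ := hmem j hj
  obtain ⟨kk, -, uk, h0k, hkk, hsk⟩ := hmem k hk
  exact joinableBy_trans (joinableBy_symm ⟨kj, uj, h0j, hkj, hsj⟩) ⟨kk, uk, h0k, hkk, hsk⟩

theorem cbqComplete_iff_cbComplete {X : Type*} [MetricSpace X] :
    CBQComplete X ↔
      ((∀ x : ℕ → X, IsCBC x → ∃ p : X, MapClusterPt p atTop x) ∧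
        ∀ x : ℕ → X, IsCBQC x → IsCBC x) := by
  constructor
  · intro h
    refine ⟨fun x hx => h x (isCBQC_of_isCBC hx), fun x hx => ?_⟩
    obtain ⟨p, hp⟩ := h x hx
    exact isCBC_of_cluster hp
  · rintro ⟨h1, h2⟩ x hx
    exact h1 x (h2 x hx)
end

section
/- A metric space X is cofinally Bourbaki quasi-complete if and only if: X is cofinally complete and every cofinally Bourbaki quasi-Cauchy sequence in X is cofinally Cauchy. -/
open Metric Filter

lemma cofCauchy_of_clusterPt {X : Type*} [MetricSpace X] {x : ℕ → X} {p : X}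
    (h : MapClusterPt p atTop x) : IsCofCauchy x := by
  intro ε hε
  have hf : ∃ᶠ n in atTop, x n ∈ Metric.ball p (ε / 2) :=
    mapClusterPt_iff_frequently.mp h _ (Metric.ball_mem_nhds p (by linarith))
  refine ⟨{n | x n ∈ Metric.ball p (ε / 2)}, Nat.frequently_atTop_iff_infinite.mp hf, ?_⟩
  intro n hn m hm
  have := dist_triangle (x n) p (x m)
  simp only [Set.mem_setOf_eq, Metric.mem_ball] at hn hm
  rw [dist_comm p (x m)] at this
  linarith

lemma cbqc_of_cofCauchy {X : Type*} [MetricSpace X] {x : ℕ → X}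
    (h : IsCofCauchy x) : IsCBQC x := by
  intro ε hε
  obtain ⟨N, hN, hd⟩ := h ε hε
  refine ⟨N, hN, fun j hj k hk => ⟨1, fun i => if i = 0 then x j else x k, rfl, rfl, ?_⟩⟩
  intro i hi
  interval_cases i
  simpa using hd j hj k hk

theorem cbqComplete_iff_cofinallyComplete {X : Type*} [MetricSpace X] :
    CBQComplete X ↔
      ((∀ x : ℕ → X, IsCofCauchy x → ∃ p : X, MapClusterPt p atTop x) ∧
        ∀ x : ℕ → X, IsCBQC x → IsCofCauchy x) := by
  constructor
  · intro H
    refine ⟨fun x hx => H x (cbqc_of_cofCauchy hx), fun x hx => ?_⟩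
    obtain ⟨p, hp⟩ := H x hx
    exact cofCauchy_of_clusterPt hp
  · rintro ⟨H1, H2⟩ x hx
    exact H1 x (H2 x hx)
end

section
/- If a metric space X is cofinally Bourbaki quasi-complete, then every continuous function f from X to any metric space Y maps every cofinally Bourbaki quasi-Cauchy sequence in X to a sequence in Y having a Cauchy (indeed, convergent) subsequence. -/
open Metric Filter

theorem continuous_image_cbqc_of_cbqComplete {X Y : Type*} [MetricSpace X] [MetricSpace Y]
    (h : CBQComplete X) (f : X → Y) (hf : Continuous f)
    (x : ℕ → X) (hx : IsCBQC x) :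
    ∃ φ : ℕ → ℕ, StrictMono φ ∧ CauchySeq (fun n => f (x (φ n))) ∧
      ∃ y : Y, Tendsto (fun n => f (x (φ n))) atTop (nhds y) := by
  obtain ⟨p, hp⟩ := h x hx
  obtain ⟨φ, hφ, htend⟩ := TopologicalSpace.FirstCountableTopology.tendsto_subseq hp
  have hT : Tendsto (fun n => f (x (φ n))) atTop (nhds (f p)) := (hf.tendsto p).comp htend
  exact ⟨φ, hφ, hT.cauchySeq, f p, hT⟩
end

section
/- If a metric space X is not cofinally Bourbaki quasi-complete, then there exists a continuous function F : X → ℝ and a cofinally Bourbaki quasi-Cauchy sequence ⟨x_n⟩ in X such that ⟨F(x_n)⟩ is unbounded (hence not cofinally Bourbaki–Cauchy in ℝ). -/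
open Metric Filter Topology

theorem exists_unbounded_continuous_of_not_cbqComplete {X : Type*} [MetricSpace X]
    (h : ¬ CBQComplete X) :
    ∃ F : X → ℝ, Continuous F ∧ ∃ x : ℕ → X, IsCBQC x ∧
      ¬ Bornology.IsBounded (Set.range fun n => F (x n)) := by
  rw [CBQComplete] at h
  push_neg at h
  obtain ⟨x, hx, hnc⟩ := h
  -- Every point has a neighborhood hit by only finitely many terms
  have hA : ∀ p : X, ∃ s ∈ 𝓝 p, {n | x n ∈ s}.Finite := by
    intro p
    have := hnc p
    rw [mapClusterPt_iff_frequently] at this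
    push_neg at this
    obtain ⟨s, hs, hfreq⟩ := this
    refine ⟨s, hs, ?_⟩
    rw [← Set.not_infinite, ← Nat.frequently_atTop_iff_infinite]
    exact Filter.not_frequently.mpr hfreq
  -- fibers are finite
  have hfib : ∀ p : X, {n | x n = p}.Finite := by
    intro p
    obtain ⟨s, hs, hfin⟩ := hA p
    refine hfin.subset fun n hn => ?_
    simp only [Set.mem_setOf_eq] at hn ⊢
    rw [hn]
    exact mem_of_mem_nhds hs
  set S : Set X := Set.range x with hS
  -- Key: every point has a neighborhood meeting S only possibly in itself
  have hkey : ∀ p : X, ∃ U ∈ 𝓝 p, ∀ y ∈ U, y ∈ S → y = p := by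
    intro p
    obtain ⟨s, hs, hfin⟩ := hA p
    set T : Set X := (x '' {n | x n ∈ s}) \ {p} with hT
    have hTfin : T.Finite := ((hfin.image x).subset Set.diff_subset)
    have hTc : IsClosed T := hTfin.isClosed
    have hpT : p ∈ Tᶜ := by simp [hT]
    refine ⟨s ∩ Tᶜ, inter_mem hs (hTc.isOpen_compl.mem_nhds hpT), ?_⟩
    rintro y ⟨hys, hyT⟩ ⟨n, rfl⟩
    by_contra hne
    exact hyT ⟨⟨n, hys, rfl⟩, hne⟩
  -- S is closed
  have hclosed : IsClosed S := by
    rw [← isOpen_compl_iff, isOpen_iff_mem_nhds]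
    intro p hp
    obtain ⟨U, hU, hUp⟩ := hkey p
    exact mem_of_superset hU fun y hy hyS => hp (hUp y hy hyS ▸ hyS)
  -- S is discrete
  have hdisc : DiscreteTopology S := by
    rw [discreteTopology_subtype_iff]
    intro p hp
    obtain ⟨U, hU, hUp⟩ := hkey p
    rw [← Filter.empty_mem_iff_bot]
    refine Filter.mem_inf_of_inter (Filter.inter_mem
      (nhdsWithin_le_nhds hU) self_mem_nhdsWithin) (Filter.mem_principal_self S) ?_
    rintro y ⟨⟨hyU, hyne⟩, hyS⟩
    exact hyne (hUp y hyU hyS)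
  -- the function on S
  let f : C(S, ℝ) := ⟨fun s => (sSup {n | x n = s.val} : ℕ), continuous_of_discreteTopology⟩
  obtain ⟨G, hG⟩ := f.exists_restrict_eq hclosed
  refine ⟨G, G.continuous, x, hx, ?_⟩
  have hGn : ∀ n : ℕ, (n : ℝ) ≤ G (x n) := by
    intro n
    have h1 : G (x n) = f ⟨x n, Set.mem_range_self n⟩ := by
      have := DFunLike.congr_fun hG (⟨x n, Set.mem_range_self n⟩ : S)
      simpa using this
    rw [h1]
    show (n : ℝ) ≤ ((sSup {m | x m = x n} : ℕ) : ℝ)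
    exact_mod_cast le_csSup (hfib (x n)).bddAbove rfl
  intro hb
  rw [isBounded_iff_forall_norm_le] at hb
  obtain ⟨C, hC⟩ := hb
  have := hC (G (x (⌈C⌉₊ + 1))) ⟨_, rfl⟩
  have h2 := hGn (⌈C⌉₊ + 1)
  have h3 : ((⌈C⌉₊ + 1 : ℕ) : ℝ) ≤ C := le_trans (le_trans h2 (le_abs_self _)) this
  push_cast at h3
  have h4 : C ≤ (⌈C⌉₊ : ℝ) := Nat.le_ceil C
  linarith
end

section
/- Let ⟨x_n⟩ be a sequence of distinct points in a metric space X with no cluster point, and define δ_n = dist(x_n, {x_k : k ≠ n}) > 0. Then the function f on A = {x_n : n ∈ ℕ} defined by f(x_n) = δ_n / n is 2-Lipschitz on A. -/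
open Metric Filter

theorem two_lipschitz_on_range {X : Type*} [MetricSpace X]
    (x : ℕ → X) (hinj : Function.Injective x)
    (hnocluster : ¬ ∃ p : X, MapClusterPt p atTop x)
    (δ : ℕ → ℝ) (hδ : ∀ n, δ n = Metric.infDist (x n) {y | ∃ k, k ≠ n ∧ y = x k}) :
    ∀ m n : ℕ, 1 ≤ m → 1 ≤ n →
      |δ m / (m : ℝ) - δ n / (n : ℝ)| ≤ 2 * dist (x m) (x n) := by
  have hδ0 : ∀ n, 0 ≤ δ n := fun n => (hδ n) ▸ Metric.infDist_nonneg
  have key : ∀ m n : ℕ, m ≠ n → δ m ≤ dist (x m) (x n) := by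
    intro m n hmn
    rw [hδ m]
    exact Metric.infDist_le_dist_of_mem ⟨n, fun h => hmn h.symm, rfl⟩
  intro m n hm hn
  rcases eq_or_ne m n with rfl | hmn
  · simp [abs_nonneg, dist_nonneg, mul_nonneg]
  have hd : 0 ≤ dist (x m) (x n) := dist_nonneg
  have hm1 : (1 : ℝ) ≤ m := by exact_mod_cast hm
  have hn1 : (1 : ℝ) ≤ n := by exact_mod_cast hn
  have h1 : δ m / m ≤ dist (x m) (x n) :=
    le_trans (div_le_self (hδ0 m) hm1) (key m n hmn)
  have h2 : δ n / n ≤ dist (x m) (x n) := by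
    refine le_trans (div_le_self (hδ0 n) hn1) ?_
    rw [dist_comm]; exact key n m (Ne.symm hmn)
  have p1 : 0 ≤ δ m / m := div_nonneg (hδ0 m) (by positivity)
  have p2 : 0 ≤ δ n / n := div_nonneg (hδ0 n) (by positivity)
  rw [abs_sub_le_iff]
  constructor <;> nlinarith
end

section
/- Let ⟨x_n⟩ be a cofinally Bourbaki quasi-Cauchy sequence of distinct terms in a metric space X. Then there exists a pairwise disjoint family {M_j : j ∈ ℕ} of infinite subsets of ℕ such that whenever i, ℓ ∈ M_j, the points x_i and x_ℓ can be joined by a (1/j)-chain. -/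
open Metric Filter

theorem exists_disjoint_chain_family {X : Type*} [MetricSpace X]
    (x : ℕ → X) (hinj : Function.Injective x) (hx : IsCBQC x) :
    ∃ M : ℕ → Set ℕ,
      (Set.univ : Set ℕ).Pairwise (Function.onFun Disjoint M) ∧
      ∀ j : ℕ, (M j).Infinite ∧
        ∀ i ∈ M j, ∀ l ∈ M j, JoinableBy (1 / (j + 1 : ℝ)) (x i) (x l) := by
  classical
  have hx' : ∀ j : ℕ, ∃ N : Set ℕ, N.Infinite ∧
      ∀ a ∈ N, ∀ b ∈ N, JoinableBy (1 / (j + 1 : ℝ)) (x a) (x b) := by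
    intro j
    exact hx _ (by positivity)
  choose A hAinf hAjoin using hx'
  set π : ℕ → ℕ := fun n => (Nat.unpair n).1 with hπ
  have step : ∀ (j p : ℕ), ∃ b, b ∈ A j ∧ p < b := by
    intro j p
    obtain ⟨b, hb, hpb⟩ := (hAinf j).exists_gt p
    exact ⟨b, hb, hpb⟩
  let s : ℕ → ℕ := fun n =>
    Nat.rec ((step (π 0) 0).choose) (fun n prev => (step (π (n + 1)) prev).choose) n
  have hs_mem : ∀ n, s n ∈ A (π n) := by
    intro n
    cases n with
    | zero => exact (step (π 0) 0).choose_spec.1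
    | succ n => exact (step (π (n + 1)) (s n)).choose_spec.1
  have hs_lt : ∀ n, s n < s (n + 1) := fun n => (step (π (n + 1)) (s n)).choose_spec.2
  have hs_mono : StrictMono s := strictMono_nat_of_lt_succ hs_lt
  refine ⟨fun j => s '' (π ⁻¹' {j}), ?_, ?_⟩
  · intro j _ j' _ hjj'
    rw [Function.onFun, Set.disjoint_left]
    rintro a ⟨n, hn, rfl⟩ ⟨m, hm, hsm⟩
    have hnm := hs_mono.injective hsm
    subst hnm
    simp only [Set.mem_preimage, Set.mem_singleton_iff] at hn hm
    exact hjj' (hn ▸ hm)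
  · intro j
    constructor
    · have hpre : (π ⁻¹' {j}).Infinite := by
        apply Set.infinite_of_injective_forall_mem (f := fun t : ℕ => Nat.pair j t)
        · intro a b hab
          simpa using congrArg (fun n => (Nat.unpair n).2) hab
        · intro t
          simp [hπ, Nat.unpair_pair]
      exact hpre.image hs_mono.injective.injOn
    · rintro i ⟨n, hn, rfl⟩ l ⟨m, hm, rfl⟩
      simp only [Set.mem_preimage, Set.mem_singleton_iff] at hn hm
      exact hAjoin j _ (hn ▸ hs_mem n) _ (hm ▸ hs_mem m)
end
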